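/- arXiv:2406.19696 — 3 statements merged into one kernel-verified Lean document; each statement's English description precedes it below -/
import Mathlib

section
/- Assume either z_i z_j < 0 for some i, j, or (z_j < 0 for all j and q_0 > 0), let φ* be the unique zero of f, and set F_e = F(φ*). Fix σ > 0. For each L > 0, let φ_L be the unique twice continuously differentiable solution of φ″ + f(φ) = 0 on [−L/2, L/2] with φ_L′(−L/2) = −σ and φ_L′(L/2) = σ; since f < 0 along the solution, φ_L′ is strictly increasing, so there is a unique δ_N(L) ∈ (0, L) with φ_L′(−L/2 + δ_N(L)) = −σ/2. Let a, b be the unique reals in (φ*, ∞) with F(a) = F_e − σ²/8 and F(b) = F_e − σ²/2. Then the integral δ_N^∞ = (1/√2) ∫_a^b (F_e − F(φ))^{−1/2} dφ is finite and δ_N(L) → δ_N^∞ as L → ∞ (formation of a Gouy–Chapman layer in the presence of an equilibrium). -/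
/-!
Along a solution the energy `u² / 2 + F φ` is conserved; call its value `E_L`. As `u` vanishes
somewhere, `E_L ≤ F φ*`, so `φ = φ*` can only happen at the equilibrium `(φ*, 0)`, which by
Grönwall the orbit never reaches. Since `u` increases somewhere, `f φ < 0` there, hence
`φ > φ*` throughout and `u' = -f φ > 0`. On the boundary layer `u < 0`, and the substitution
`y = φ x` with `u = -√(2 (E_L - F y))` gives `δ_N(L) = (1/√2) ∫_{p_L}^{q_L} (E_L - F)^{-1/2}`
where `F p_L = E_L - σ²/8`, `F q_L = E_L - σ²/2`. The mean of `u'` over the interval is `2σ/L`,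
so for large `L` the orbit comes close to `φ*`, i.e. `E_L → F φ*`; then `p_L → a`, `q_L → b` and
the integrals converge.
-/

open Real Filter Set Topology MeasureTheory

/-- A (C²) solution of the PB equation `φ'' + f(φ) = 0` on `[a, b]`, written as the
first-order planar system `φ' = u`, `u' = -f(φ)`. -/
def IsPBSol (f : ℝ → ℝ) (a b : ℝ) (φ u : ℝ → ℝ) : Prop :=
  ∀ x ∈ Set.Icc a b,
    HasDerivWithinAt φ (u x) (Set.Icc a b) x ∧
    HasDerivWithinAt u (-(f (φ x))) (Set.Icc a b) x

section Model

variable {N : ℕ} (z c : Fin N → ℝ) (q0 : ℝ)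

lemma hasDerivAt_potential (x : ℝ) :
    HasDerivAt (fun φ => q0 * φ - ∑ j, c j * exp (-z j * φ))
      (q0 + ∑ j, z j * c j * exp (-z j * x)) x := by
  refine (((hasDerivAt_id' x).const_mul q0).fun_sub (HasDerivAt.fun_sum (u := Finset.univ)
    fun j _ => (((hasDerivAt_id' x).const_mul (-z j)).exp).const_mul (c j))).congr_deriv ?_
  rw [sub_eq_add_neg, ← Finset.sum_neg_distrib]
  simp only [mul_one]
  exact congrArg _ (Finset.sum_congr rfl fun j _ => by ring)

lemma hasDerivAt_charge (x : ℝ) :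
    HasDerivAt (fun φ => q0 + ∑ j, z j * c j * exp (-z j * φ))
      (-∑ j, z j ^ 2 * c j * exp (-z j * x)) x := by
  refine ((HasDerivAt.fun_sum (u := Finset.univ) fun j _ =>
    (((hasDerivAt_id' x).const_mul (-z j)).exp).const_mul (z j * c j)).const_add q0).congr_deriv ?_
  rw [← Finset.sum_neg_distrib]
  exact Finset.sum_congr rfl fun j _ => by ring

lemma strictAnti_charge (hN : 1 ≤ N) (hz : ∀ j, z j ≠ 0) (hc : ∀ j, 0 < c j) :
    StrictAnti fun φ => q0 + ∑ j, z j * c j * exp (-z j * φ) := by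
  have : Nonempty (Fin N) := ⟨⟨0, hN⟩⟩
  refine strictAnti_of_deriv_neg fun x => ?_
  rw [(hasDerivAt_charge z c q0 x).deriv, neg_neg_iff_pos]
  exact Finset.sum_pos (fun j _ => by have := hz j; have := hc j; positivity) Finset.univ_nonempty

lemma locallyLipschitz_charge :
    LocallyLipschitz fun φ => q0 + ∑ j, z j * c j * exp (-z j * φ) :=
  ContDiff.locallyLipschitz (𝕂 := ℝ) (by fun_prop)

end Model

section Potential

variable {f F : ℝ → ℝ} {φstar : ℝ}

lemma strictMonoOn_Iic_of_hasDerivAt (hF : ∀ x, HasDerivAt F (f x) x) (hf : StrictAnti f)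
    (hstar : f φstar = 0) : StrictMonoOn F (Iic φstar) :=
  strictMonoOn_of_deriv_pos (convex_Iic _) (fun x _ => (hF x).continuousAt.continuousWithinAt)
    fun x hx => by
      rw [interior_Iic] at hx
      rw [(hF x).deriv, ← hstar]
      exact hf hx

lemma strictAntiOn_Ici_of_hasDerivAt (hF : ∀ x, HasDerivAt F (f x) x) (hf : StrictAnti f)
    (hstar : f φstar = 0) : StrictAntiOn F (Ici φstar) :=
  strictAntiOn_of_deriv_neg (convex_Ici _) (fun x _ => (hF x).continuousAt.continuousWithinAt)
    fun x hx => by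
      rw [interior_Ici] at hx
      rw [(hF x).deriv, ← hstar]
      exact hf hx

lemma apply_le_of_hasDerivAt_of_strictAnti (hF : ∀ x, HasDerivAt F (f x) x) (hf : StrictAnti f)
    (hstar : f φstar = 0) (x : ℝ) : F x ≤ F φstar := by
  rcases le_total x φstar with hx | hx
  · exact (strictMonoOn_Iic_of_hasDerivAt hF hf hstar).monotoneOn hx self_mem_Iic hx
  · exact (strictAntiOn_Ici_of_hasDerivAt hF hf hstar).antitoneOn self_mem_Ici hx hx

end Potential

namespace IsPBSol

variable {f F : ℝ → ℝ} {A B φstar : ℝ} {φ u : ℝ → ℝ}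

lemma continuousOn_fst (h : IsPBSol f A B φ u) : ContinuousOn φ (Icc A B) :=
  fun x hx => (h x hx).1.continuousWithinAt

lemma continuousOn_snd (h : IsPBSol f A B φ u) : ContinuousOn u (Icc A B) :=
  fun x hx => (h x hx).2.continuousWithinAt

lemma hasDerivAt_snd (h : IsPBSol f A B φ u) {x : ℝ} (hx : x ∈ Ioo A B) :
    HasDerivAt u (-f (φ x)) x :=
  (h x (Ioo_subset_Icc_self hx)).2.hasDerivAt (Icc_mem_nhds hx.1 hx.2)

lemma energy_eq (h : IsPBSol f A B φ u) (hF : ∀ x, HasDerivAt F (f x) x) {x : ℝ}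
    (hx : x ∈ Icc A B) : u x ^ 2 / 2 + F (φ x) = u A ^ 2 / 2 + F (φ A) := by
  have hW : ∀ y ∈ Icc A B,
      HasDerivWithinAt (fun y => u y ^ 2 / 2 + F (φ y)) 0 (Icc A B) y := fun y hy => by
    refine ((((h y hy).2.pow 2).div_const 2).add
      ((hF (φ y)).comp_hasDerivWithinAt y (h y hy).1)).congr_deriv ?_
    push_cast
    ring
  exact constant_of_has_deriv_right_zero (fun y hy => (hW y hy).continuousWithinAt)
    (fun y hy => (hW y (Ico_subset_Icc_self hy)).mono_of_mem_nhdsWithin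
      (Icc_mem_nhdsGE_of_mem hy)) x hx

lemma exists_neg_apply_eq_slope (h : IsPBSol f A B φ u) (hAB : A < B) :
    ∃ c ∈ Ioo A B, -f (φ c) = (u B - u A) / (B - A) :=
  exists_hasDerivAt_eq_slope u _ hAB h.continuousOn_snd fun _ hx => h.hasDerivAt_snd hx

lemma eq_zero_of_eq_equilibrium (h : IsPBSol f A B φ u) (hf : LocallyLipschitz f)
    (hstar : f φstar = 0) {x₀ : ℝ} (hx₀ : x₀ ∈ Icc A B) (hφ : φ x₀ = φstar) (hu : u x₀ = 0) :
    u B = 0 := by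
  have hsub : Icc x₀ B ⊆ Icc A B := Icc_subset_Icc_left hx₀.1
  have hcpt : IsCompact (insert φstar (φ '' Icc A B)) :=
    (isCompact_Icc.image_of_continuousOn h.continuousOn_fst).insert φstar
  obtain ⟨K, hK⟩ := hf.locallyLipschitzOn.exists_lipschitzOnWith_of_compact hcpt
  set g : ℝ → ℝ × ℝ := fun x => (φ x - φstar, u x)
  have hg : ∀ x ∈ Icc A B, HasDerivWithinAt g (u x, -f (φ x)) (Icc A B) x :=
    fun x hx => ((h x hx).1.sub_const φstar).prodMk (h x hx).2
  have hbound : ∀ x ∈ Ico x₀ B, ‖(u x, -f (φ x))‖ ≤ max 1 K * ‖g x‖ + 0 := by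
    intro x hx
    have hfx : |f (φ x)| ≤ K * |φ x - φstar| := by
      simpa [hstar, Real.dist_eq] using hK.dist_le_mul (φ x)
        (mem_insert_of_mem _ (mem_image_of_mem _ (hsub (Ico_subset_Icc_self hx))))
        φstar (mem_insert _ _)
    simp only [g, Prod.norm_mk, Real.norm_eq_abs, abs_neg, add_zero]
    have hK1 : (1 : ℝ) ≤ max 1 K := le_max_left _ _
    have hKK : (K : ℝ) ≤ max 1 K := le_max_right _ _
    refine max_le ?_ (hfx.trans ?_)
    · nlinarith [le_max_right |φ x - φstar| |u x|, abs_nonneg (u x)]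
    · nlinarith [le_max_left |φ x - φstar| |u x|, abs_nonneg (φ x - φstar), K.2]
  have hgB := norm_le_gronwallBound_of_norm_deriv_right_le (f := g) (δ := 0) (ε := 0)
    (fun x hx => (hg x (hsub hx)).continuousWithinAt.mono hsub)
    (fun x hx => (hg x (hsub (Ico_subset_Icc_self hx))).mono_of_mem_nhdsWithin
      (Icc_mem_nhdsGE_of_mem ⟨hx₀.1.trans hx.1, hx.2⟩)) (by simp [g, hφ, hu]) hbound B
    ⟨hx₀.2, le_rfl⟩
  rw [gronwallBound_ε0_δ0, norm_le_zero_iff, Prod.ext_iff] at hgB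
  exact hgB.2

lemma energy_le (h : IsPBSol f A B φ u) (hF : ∀ x, HasDerivAt F (f x) x)
    (hFmax : ∀ y, F y ≤ F φstar) (hAB : A ≤ B) (hua : u A ≤ 0) (hub : 0 ≤ u B) :
    u A ^ 2 / 2 + F (φ A) ≤ F φstar := by
  obtain ⟨x, hx, hux⟩ := intermediate_value_Icc hAB h.continuousOn_snd ⟨hua, hub⟩
  have := h.energy_eq hF hx
  rw [hux] at this
  linarith [hFmax (φ x)]

lemma lt_fst_of_neg_of_pos (h : IsPBSol f A B φ u) (hF : ∀ x, HasDerivAt F (f x) x)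
    (hf : StrictAnti f) (hlip : LocallyLipschitz f) (hstar : f φstar = 0) (hAB : A < B)
    (hua : u A < 0) (hub : 0 < u B) {x : ℝ} (hx : x ∈ Icc A B) : φstar < φ x := by
  have hE := h.energy_le hF (apply_le_of_hasDerivAt_of_strictAnti hF hf hstar) hAB.le hua.le hub.le
  -- where `φ = φstar`, the bound on the energy forces `u = 0`: the orbit would be at equilibrium
  have hne : ∀ y ∈ Icc A B, φ y ≠ φstar := fun y hy hφy => by
    have hy' := h.energy_eq hF hy
    rw [hφy] at hy'
    have : u y = 0 := by nlinarith
    exact hub.ne' (h.eq_zero_of_eq_equilibrium hlip hstar hy hφy this)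
  obtain ⟨c, hc, hslope⟩ := h.exists_neg_apply_eq_slope hAB
  have hφc : φstar < φ c := hf.lt_iff_gt.mp <| by
    rw [hstar]
    have : 0 < (u B - u A) / (B - A) := div_pos (by linarith) (by linarith)
    linarith
  by_contra! hφx
  obtain ⟨y, hy, hφy⟩ := isPreconnected_Icc.intermediate_value hx (Ioo_subset_Icc_self hc)
    h.continuousOn_fst ⟨hφx, hφc.le⟩
  exact hne y hy hφy

lemma strictMonoOn_snd (h : IsPBSol f A B φ u) (hf : StrictAnti f) (hstar : f φstar = 0)
    (hpos : ∀ x ∈ Icc A B, φstar < φ x) : StrictMonoOn u (Icc A B) := by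
  refine strictMonoOn_of_hasDerivWithinAt_pos (f' := fun x => -f (φ x)) (convex_Icc A B)
    h.continuousOn_snd (fun x hx => ?_) (fun x hx => ?_)
  · rw [interior_Icc] at hx ⊢
    exact (h.hasDerivAt_snd hx).hasDerivWithinAt
  · rw [interior_Icc] at hx
    have := hf (hpos x (Ioo_subset_Icc_self hx))
    linarith

lemma apply_lt_energy (h : IsPBSol f A B φ u) (hF : ∀ x, HasDerivAt F (f x) x)
    (hFanti : StrictAntiOn F (Ici φstar)) (hf : StrictAnti f) (hAB : A < B)
    (hpos : ∀ x ∈ Icc A B, φstar < φ x) {y : ℝ} (hy : φstar < y)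
    (hslope : u B - u A < (B - A) * -f y) : F y < u A ^ 2 / 2 + F (φ A) := by
  by_contra! hle
  obtain ⟨c, hc, hslope_c⟩ := h.exists_neg_apply_eq_slope hAB
  have hFc : F (φ c) ≤ F y := by
    have := h.energy_eq hF (Ioo_subset_Icc_self hc)
    nlinarith [sq_nonneg (u c)]
  have hyc : y ≤ φ c :=
    (hFanti.le_iff_ge (hpos c (Ioo_subset_Icc_self hc)).le hy.le).mp hFc
  have : -f y ≤ (u B - u A) / (B - A) := by
    rw [← hslope_c]
    linarith [hf.antitone hyc]
  rw [le_div_iff₀ (by linarith)] at this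
  linarith

lemma sub_eq_integral (h : IsPBSol f A B φ u) (hF : ∀ x, HasDerivAt F (f x) x) {x : ℝ}
    (hx : x ∈ Icc A B) (hneg : ∀ y ∈ Icc A x, u y < 0) :
    x - A = 1 / √2 * ∫ y in φ x..φ A, 1 / √(u A ^ 2 / 2 + F (φ A) - F y) := by
  set E := u A ^ 2 / 2 + F (φ A) with hE
  have hsub : Icc A x ⊆ Icc A B := Icc_subset_Icc_right hx.2
  have henergy : ∀ y ∈ Icc A x, E - F (φ y) = (-u y) ^ 2 / 2 := fun y hy => by
    have := h.energy_eq hF (hsub hy)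
    rw [neg_sq]
    linarith
  have hg : ContinuousOn (fun y => 1 / √(E - F y)) (φ '' uIcc A x) := by
    rw [uIcc_of_le hx.1]
    rintro _ ⟨y, hy, rfl⟩
    have hpos : 0 < E - F (φ y) := by rw [henergy y hy]; nlinarith [hneg y hy]
    have hFc : Continuous F := continuous_iff_continuousAt.mpr fun y => (hF y).continuousAt
    exact (continuousAt_const.div (continuous_sqrt.comp (continuous_const.sub hFc)).continuousAt
      (sqrt_pos.mpr hpos).ne').continuousWithinAt
  have hφ' : ∀ y ∈ Ioo (min A x) (max A x), HasDerivWithinAt φ (u y) (Ioi y) y := fun y hy => by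
    rw [min_eq_left hx.1, max_eq_right hx.1] at hy
    exact ((h y (hsub (Ioo_subset_Icc_self hy))).1.hasDerivAt
      (Icc_mem_nhds hy.1 (hy.2.trans_le hx.2))).hasDerivWithinAt
  have hcov := intervalIntegral.integral_comp_mul_deriv'' (g := fun y => 1 / √(E - F y))
    (h.continuousOn_fst.mono (uIcc_of_le hx.1 ▸ hsub)) hφ'
    (h.continuousOn_snd.mono (uIcc_of_le hx.1 ▸ hsub)) hg
  -- along the orbit `u = -√(2 (E - F φ))`, so the substituted integrand is constant
  have hconst : ∫ y in A..x, ((fun y => 1 / √(E - F y)) ∘ φ) y * u y = ∫ _ in A..x, -√2 := by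
    refine intervalIntegral.integral_congr fun y hy => ?_
    rw [uIcc_of_le hx.1] at hy
    have hu := hneg y hy
    simp only [Function.comp_apply, henergy y hy, sqrt_div' _ zero_le_two,
      sqrt_sq (neg_nonneg.mpr hu.le)]
    field_simp [hu.ne]
  rw [hconst, intervalIntegral.integral_const, smul_eq_mul] at hcov
  rw [intervalIntegral.integral_symm, ← hcov]
  field_simp

lemma layer_width_eq (h : IsPBSol f A B φ u) (hF : ∀ x, HasDerivAt F (f x) x) (hf : StrictAnti f)
    (hlip : LocallyLipschitz f) (hstar : f φstar = 0) {σ d : ℝ} (hσ : 0 < σ) (hA : u A = -σ)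
    (hB : u B = σ) (hd : d ∈ Ioo 0 (B - A)) (hud : u (A + d) = -σ / 2) :
    φstar ≤ φ (A + d) ∧ F (φ (A + d)) = σ ^ 2 / 2 + F (φ A) - σ ^ 2 / 8 ∧
      d = 1 / √2 * ∫ y in φ (A + d)..φ A, 1 / √(σ ^ 2 / 2 + F (φ A) - F y) := by
  have hAB : A < B := by linarith [hd.1, hd.2]
  have hpos : ∀ x ∈ Icc A B, φstar < φ x := fun x hx =>
    h.lt_fst_of_neg_of_pos hF hf hlip hstar hAB (by linarith) (by linarith) hx
  have hx : A + d ∈ Icc A B := ⟨by linarith [hd.1], by linarith [hd.2]⟩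
  have hneg : ∀ y ∈ Icc A (A + d), u y < 0 := fun y hy => by
    have := (h.strictMonoOn_snd hf hstar hpos).monotoneOn ⟨hy.1, hy.2.trans hx.2⟩ hx hy.2
    linarith
  have henergy := h.energy_eq hF hx
  have hwidth := h.sub_eq_integral hF hx hneg
  rw [hud, hA] at henergy
  rw [hA, neg_sq, add_sub_cancel_left] at hwidth
  exact ⟨(hpos _ hx).le, by linarith, hwidth⟩

end IsPBSol

section Limits

variable {ι : Type*} {l : Filter ι} {F : ℝ → ℝ} {φstar : ℝ}

lemma StrictAntiOn.tendsto_of_tendsto_comp {c x : ℝ} (hF : StrictAntiOn F (Ici c)) (hx : c ≤ x)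
    {p : ι → ℝ} (hp : ∀ᶠ i in l, c ≤ p i) (h : Tendsto (fun i => F (p i)) l (𝓝 (F x))) :
    Tendsto p l (𝓝 x) := by
  refine tendsto_order.2 ⟨fun y hy => ?_, fun y hy => ?_⟩
  · rcases lt_or_ge y c with hyc | hyc
    · filter_upwards [hp] with i hi using hyc.trans_le hi
    · filter_upwards [hp, (tendsto_order.1 h).2 _ (hF hyc hx hy)] with i hi hFi
      exact (hF.lt_iff_gt hi hyc).mp hFi
  · have hyc : c ≤ y := hx.trans hy.le
    filter_upwards [hp, (tendsto_order.1 h).1 _ (hF hx hyc hy)] with i hi hFi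
    exact (hF.lt_iff_gt hyc hi).mp hFi

lemma tendsto_of_forall_eventually_lt {E : ι → ℝ} (hFc : ContinuousWithinAt F (Ioi φstar) φstar)
    (hle : ∀ᶠ i in l, E i ≤ F φstar) (hlt : ∀ y, φstar < y → ∀ᶠ i in l, F y < E i) :
    Tendsto E l (𝓝 (F φstar)) := by
  refine tendsto_order.2 ⟨fun e he => ?_, fun e he => hle.mono fun i hi => hi.trans_lt he⟩
  obtain ⟨y, hey, hy⟩ := (((tendsto_order.1 hFc).1 e he).and self_mem_nhdsWithin).exists
  filter_upwards [hlt y hy] with i hi using hey.trans hi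

variable {α β e s t : ℝ}

lemma le_sub_apply_of_mem_uIcc (hFanti : StrictAntiOn F (Ici φstar)) (hαβ : α ≤ β)
    (hs : φstar ≤ s) (hFs : F s = e - α) (ht : φstar ≤ t) (hFt : F t = e - β) {y : ℝ}
    (hy : y ∈ uIcc s t) : α ≤ e - F y := by
  have hst : s ≤ t := (hFanti.le_iff_ge ht hs).mp (by linarith)
  rw [uIcc_of_le hst] at hy
  linarith [hFanti.antitoneOn hs (hs.trans hy.1) hy.1]

lemma intervalIntegrable_one_div_sqrt (hFc : Continuous F) (hFanti : StrictAntiOn F (Ici φstar))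
    (hα : 0 < α) (hαβ : α ≤ β) (hs : φstar ≤ s) (hFs : F s = e - α) (ht : φstar ≤ t)
    (hFt : F t = e - β) : IntervalIntegrable (fun y => 1 / √(e - F y)) volume s t :=
  ContinuousOn.intervalIntegrable <| continuousOn_const.div
    (continuous_const.sub hFc).continuousOn.sqrt fun _ hy =>
      (sqrt_pos.mpr (hα.trans_le (le_sub_apply_of_mem_uIcc hFanti hαβ hs hFs ht hFt hy))).ne'

lemma tendsto_integral_one_div_sqrt {a b : ℝ} {E p q : ι → ℝ} (hFc : Continuous F)
    (hFanti : StrictAntiOn F (Ici φstar)) (hα : 0 < α) (hαβ : α ≤ β) (ha : φstar ≤ a)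
    (hFa : F a = F φstar - α) (hb : φstar ≤ b) (hFb : F b = F φstar - β)
    (hE : Tendsto E l (𝓝 (F φstar))) (hp : ∀ᶠ i in l, φstar ≤ p i ∧ F (p i) = E i - α)
    (hq : ∀ᶠ i in l, φstar ≤ q i ∧ F (q i) = E i - β) :
    Tendsto (fun i => ∫ y in p i..q i, 1 / √(E i - F y)) l
      (𝓝 (∫ y in a..b, 1 / √(F φstar - F y))) := by
  have hpa : Tendsto p l (𝓝 a) := hFanti.tendsto_of_tendsto_comp ha (hp.mono fun _ hi => hi.1)
    (hFa ▸ (hE.sub_const α).congr' (hp.mono fun _ hi => hi.2.symm))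
  have hqb : Tendsto q l (𝓝 b) := hFanti.tendsto_of_tendsto_comp hb (hq.mono fun _ hi => hi.1)
    (hFb ▸ (hE.sub_const β).congr' (hq.mono fun _ hi => hi.2.symm))
  -- Truncating `e - F y` from below at `α` makes the integrand jointly continuous in `(e, y)`
  -- without changing it on the intervals of integration.
  set k : ℝ → ℝ → ℝ := fun e y => 1 / √(max (e - F y) α)
  have hk : Continuous k.uncurry := continuous_const.div
    (((continuous_fst.sub (hFc.comp continuous_snd)).max continuous_const).sqrt) fun _ =>
      (sqrt_pos.mpr (lt_max_of_lt_right hα)).ne'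
  have htrunc : ∀ {e s t}, φstar ≤ s → F s = e - α → φstar ≤ t → F t = e - β →
      ∫ y in s..t, 1 / √(e - F y) = ∫ y in s..t, k e y := fun hs hFs ht hFt =>
    intervalIntegral.integral_congr fun _ hy => congrArg (fun r => 1 / √r)
      (max_eq_left (le_sub_apply_of_mem_uIcc hFanti hαβ hs hFs ht hFt hy)).symm
  have hΦ : Continuous fun x : ℝ × ℝ × ℝ => ∫ y in x.2.1..x.2.2, k x.1 y := by
    have hint : ∀ e s t, IntervalIntegrable (k e) volume s t :=
      fun e _ _ => (hk.uncurry_left e).intervalIntegrable _ _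
    have hsplit : (fun x : ℝ × ℝ × ℝ => ∫ y in x.2.1..x.2.2, k x.1 y) =
        fun x => (∫ y in 0..x.2.2, k x.1 y) - ∫ y in 0..x.2.1, k x.1 y :=
      funext fun x => (intervalIntegral.integral_interval_sub_left (hint _ _ _) (hint _ _ _)).symm
    rw [hsplit]
    have hk' : Continuous fun x : (ℝ × ℝ × ℝ) × ℝ => k x.1.1 x.2 :=
      hk.comp (continuous_fst.fst.prodMk continuous_snd)
    exact (intervalIntegral.continuous_parametric_intervalIntegral_of_continuous hk'
      continuous_snd.snd).sub
      (intervalIntegral.continuous_parametric_intervalIntegral_of_continuous hk' continuous_snd.fst)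
  rw [htrunc ha hFa hb hFb]
  refine ((hΦ.tendsto (F φstar, a, b)).comp (hE.prodMk_nhds (hpa.prodMk_nhds hqb))).congr' ?_
  filter_upwards [hp, hq] with i hpi hqi
  exact (htrunc hpi.1 hpi.2 hqi.1 hqi.2).symm

end Limits

lemma tendsto_energy_of_neumann {f F : ℝ → ℝ} {φstar σ : ℝ} {φf uf : ℝ → ℝ → ℝ}
    (hF : ∀ x, HasDerivAt F (f x) x) (hf : StrictAnti f) (hlip : LocallyLipschitz f)
    (hstar : f φstar = 0) (hσ : 0 < σ)
    (hsol : ∀ L : ℝ, 0 < L → IsPBSol f (-(L / 2)) (L / 2) (φf L) (uf L) ∧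
      uf L (-(L / 2)) = -σ ∧ uf L (L / 2) = σ) :
    Tendsto (fun L => σ ^ 2 / 2 + F (φf L (-(L / 2)))) atTop (𝓝 (F φstar)) := by
  refine tendsto_of_forall_eventually_lt (hF φstar).continuousAt.continuousWithinAt ?_
    fun y hy => ?_
  · filter_upwards [eventually_gt_atTop 0] with L hL
    obtain ⟨h, hA, hB⟩ := hsol L hL
    have := h.energy_le hF (apply_le_of_hasDerivAt_of_strictAnti hF hf hstar) (by linarith)
      (by linarith) (by linarith)
    rwa [hA, neg_sq] at this
  · have hfy : 0 < -f y := by linarith [hf hy]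
    filter_upwards [eventually_gt_atTop 0, eventually_gt_atTop (2 * σ / -f y)] with L hL hLy
    obtain ⟨h, hA, hB⟩ := hsol L hL
    rw [div_lt_iff₀ hfy] at hLy
    have := h.apply_lt_energy hF (strictAntiOn_Ici_of_hasDerivAt hF hf hstar) hf (by linarith)
      (fun x hx => h.lt_fst_of_neg_of_pos hF hf hlip hstar (by linarith) (by linarith)
        (by linarith) hx) hy (by rw [hA, hB]; linarith)
    rwa [hA, neg_sq] at this

theorem stmt16_general {N : ℕ} (hN : 1 ≤ N) (z c : Fin N → ℝ)
    (hz : ∀ j, z j ≠ 0) (hc : ∀ j, 0 < c j) (q0 : ℝ)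
    (f F : ℝ → ℝ)
    (hf : ∀ φ : ℝ, f φ = q0 + ∑ j, z j * c j * Real.exp (-(z j) * φ))
    (hF : ∀ φ : ℝ, F φ = q0 * φ - ∑ j, c j * Real.exp (-(z j) * φ))
    (φstar : ℝ) (hstar : f φstar = 0)
    (σ : ℝ) (hσ : 0 < σ)
    (a b : ℝ) (ha : φstar < a) (hb : φstar < b)
    (hFa : F a = F φstar - σ ^ 2 / 8) (hFb : F b = F φstar - σ ^ 2 / 2)
    (φf uf : ℝ → ℝ → ℝ)
    (hsol : ∀ L : ℝ, 0 < L →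
      IsPBSol f (-(L / 2)) (L / 2) (φf L) (uf L) ∧
      uf L (-(L / 2)) = -σ ∧ uf L (L / 2) = σ)
    (δ : ℝ → ℝ)
    (hδ : ∀ L : ℝ, 0 < L →
      δ L ∈ Set.Ioo 0 L ∧ uf L (-(L / 2) + δ L) = -σ / 2) :
    IntervalIntegrable (fun φ => 1 / Real.sqrt (F φstar - F φ)) volume a b ∧
    Tendsto δ atTop
      (𝓝 ((1 / Real.sqrt 2) * ∫ φ in a..b, 1 / Real.sqrt (F φstar - F φ))) := by
  have hFd : ∀ x, HasDerivAt F (f x) x := by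
    rw [funext hF, funext hf]
    exact hasDerivAt_potential z c q0
  have hfa : StrictAnti f := funext hf ▸ strictAnti_charge z c q0 hN hz hc
  have hlip : LocallyLipschitz f := funext hf ▸ locallyLipschitz_charge z c q0
  have hFc : Continuous F := continuous_iff_continuousAt.2 fun x => (hFd x).continuousAt
  have hFanti := strictAntiOn_Ici_of_hasDerivAt hFd hfa hstar
  have hσ8 : 0 < σ ^ 2 / 8 := by positivity
  have hσ82 : σ ^ 2 / 8 ≤ σ ^ 2 / 2 := by linarith
  refine ⟨intervalIntegrable_one_div_sqrt hFc hFanti hσ8 hσ82 ha.le hFa hb.le hFb, ?_⟩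
  set E : ℝ → ℝ := fun L => σ ^ 2 / 2 + F (φf L (-(L / 2)))
  have hwidth : ∀ᶠ L in atTop, φstar ≤ φf L (-(L / 2) + δ L) ∧
      F (φf L (-(L / 2) + δ L)) = E L - σ ^ 2 / 8 ∧
      δ L = 1 / √2 * ∫ y in φf L (-(L / 2) + δ L)..φf L (-(L / 2)), 1 / √(E L - F y) := by
    filter_upwards [eventually_gt_atTop 0] with L hL
    obtain ⟨h, hA, hB⟩ := hsol L hL
    exact h.layer_width_eq hFd hfa hlip hstar hσ hA hB (by simpa [add_halves] using (hδ L hL).1)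
      (hδ L hL).2
  refine ((tendsto_integral_one_div_sqrt hFc hFanti hσ8 hσ82 ha.le hFa hb.le hFb
    (tendsto_energy_of_neumann hFd hfa hlip hstar hσ hsol) (hwidth.mono fun L h => ⟨h.1, h.2.1⟩)
    ?_).const_mul (1 / √2)).congr' (hwidth.mono fun L h => h.2.2.symm)
  filter_upwards [eventually_gt_atTop 0] with L hL
  obtain ⟨h, hA, hB⟩ := hsol L hL
  exact ⟨(h.lt_fst_of_neg_of_pos hFd hfa hlip hstar (by linarith) (by linarith) (by linarith)
    ⟨le_rfl, by linarith⟩).le, by ring⟩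

/-- Formation of a Gouy–Chapman layer in the presence of an equilibrium.
In a saddle case (some `z i * z j < 0`, or all `z j < 0` with `q0 > 0`) with unique zero
`φ*` of `f` and `F_e = F(φ*)`: fix `σ > 0`, let `δ_N(L)` be the boundary-layer width of
the symmetric Neumann problem (determined by `φ_L'(-L/2 + δ_N(L)) = -σ/2`), and let
`a, b > φ*` satisfy `F(a) = F_e - σ²/8`, `F(b) = F_e - σ²/2`.  Then the integral
`δ_N^∞ = (1/√2) ∫_a^b (F_e − F(φ))^{-1/2} dφ` is finite and `δ_N(L) → δ_N^∞` as `L → ∞`. -/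
theorem stmt16 {N : ℕ} (hN : 1 ≤ N) (z c : Fin N → ℝ)
    (hz : ∀ j, z j ≠ 0) (hc : ∀ j, 0 < c j) (q0 : ℝ)
    (f F : ℝ → ℝ)
    (hf : ∀ φ : ℝ, f φ = q0 + ∑ j, z j * c j * Real.exp (-(z j) * φ))
    (hF : ∀ φ : ℝ, F φ = q0 * φ - ∑ j, c j * Real.exp (-(z j) * φ))
    (hcase : (∃ i j, z i * z j < 0) ∨ ((∀ j, z j < 0) ∧ 0 < q0))
    (φstar : ℝ) (hstar : f φstar = 0)
    (σ : ℝ) (hσ : 0 < σ)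
    (a b : ℝ) (ha : φstar < a) (hb : φstar < b)
    (hFa : F a = F φstar - σ ^ 2 / 8) (hFb : F b = F φstar - σ ^ 2 / 2)
    (φf uf : ℝ → ℝ → ℝ)
    (hsol : ∀ L : ℝ, 0 < L →
      IsPBSol f (-(L / 2)) (L / 2) (φf L) (uf L) ∧
      uf L (-(L / 2)) = -σ ∧ uf L (L / 2) = σ)
    (δ : ℝ → ℝ)
    (hδ : ∀ L : ℝ, 0 < L →
      δ L ∈ Set.Ioo 0 L ∧ uf L (-(L / 2) + δ L) = -σ / 2) :
    IntervalIntegrable (fun φ => 1 / Real.sqrt (F φstar - F φ)) volume a b ∧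
    Tendsto δ atTop
      (𝓝 ((1 / Real.sqrt 2) * ∫ φ in a..b, 1 / Real.sqrt (F φstar - F φ))) :=
  stmt16_general hN z c hz hc q0 f F hf hF φstar hstar σ hσ a b ha hb hFa hFb φf uf hsol δ hδ
end

section
/- Assume q_0 > 0 and z_j > 0 for all j (no equilibrium). Fix φ_s ∈ ℝ. For each L > 0, let φ_L be the unique twice continuously differentiable solution of φ″ + f(φ) = 0 on [−L/2, L/2] with φ_L(−L/2) = φ_L(L/2) = φ_s; since f > 0 everywhere, φ_L′ is strictly decreasing with φ_L′(−L/2) = −φ_L′(L/2) > 0, so there is a unique δ_D(L) ∈ (0, L) with φ_L′(−L/2 + δ_D(L)) = φ_L′(−L/2)/2. Then 1/4 ≤ liminf_{L→∞} δ_D(L)/L ≤ limsup_{L→∞} δ_D(L)/L ≤ 1; in particular δ_D(L) and L have the same length scale and there is no Gouy–Chapman layer in the absence of equilibrium. -/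
open Real Filter Set Topology

lemma monotoneOn_Icc_of_hasDerivWithinAt_nonneg {g g' : ℝ → ℝ} {a b : ℝ}
    (hg : ∀ x ∈ Icc a b, HasDerivWithinAt g (g' x) (Icc a b) x)
    (hg' : ∀ x ∈ Ioo a b, 0 ≤ g' x) : MonotoneOn g (Icc a b) := by
  refine monotoneOn_of_hasDerivWithinAt_nonneg (convex_Icc a b)
    (fun x hx => (hg x hx).continuousWithinAt) (fun x hx => ?_) (by simpa using hg')
  rw [interior_Icc] at hx ⊢
  exact (hg x (Ioo_subset_Icc_self hx)).mono Ioo_subset_Icc_self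

namespace IsPBSol

variable {f : ℝ → ℝ} {a b : ℝ} {φ u : ℝ → ℝ}

lemma mono (h : IsPBSol f a b φ u) {a' b' : ℝ} (ha : a ≤ a') (hb : b' ≤ b) :
    IsPBSol f a' b' φ u := fun x hx =>
  have hsub : Icc a' b' ⊆ Icc a b := Icc_subset_Icc ha hb
  ⟨(h x (hsub hx)).1.mono hsub, (h x (hsub hx)).2.mono hsub⟩

lemma add_mul_sub_le (h : IsPBSol f a b φ u) {m : ℝ} (hm : ∀ t ∈ Icc a b, m ≤ u t)
    {x : ℝ} (hx : x ∈ Icc a b) : φ a + m * (x - a) ≤ φ x := by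
  have hmono : MonotoneOn (fun t => φ t - m * t) (Icc a b) :=
    monotoneOn_Icc_of_hasDerivWithinAt_nonneg
      (fun t ht => (h t ht).1.sub ((hasDerivWithinAt_id t _).const_mul m))
      (fun t ht => by simpa using hm t (Ioo_subset_Icc_self ht))
  have := hmono (left_mem_Icc.2 (hx.1.trans hx.2)) hx hx.1
  simp only at this
  linarith

lemma mul_sub_le_sub (h : IsPBSol f a b φ u) {q0 : ℝ} (hf : ∀ y, q0 ≤ f y) {x y : ℝ}
    (hx : x ∈ Icc a b) (hy : y ∈ Icc a b) (hxy : x ≤ y) : q0 * (y - x) ≤ u x - u y := by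
  have hmono : MonotoneOn (fun t => -u t - q0 * t) (Icc a b) :=
    monotoneOn_Icc_of_hasDerivWithinAt_nonneg
      (fun t ht => (h t ht).2.neg.sub ((hasDerivWithinAt_id t _).const_mul q0))
      (fun t _ => by simpa using hf (φ t))
  have := hmono hx hy hxy
  simp only at this
  linarith

lemma mul_sub_div_two_le (h : IsPBSol f a b φ u) {q0 : ℝ} (hf : ∀ y, q0 ≤ f y)
    (hab : a < b) (hφ : φ a = φ b) : q0 * (b - a) / 2 ≤ u a := by
  have ha : a ∈ Icc a b := left_mem_Icc.2 hab.le
  have hmono : MonotoneOn (fun t => u a * t - q0 * (t - a) ^ 2 / 2 - φ t) (Icc a b) := by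
    refine monotoneOn_Icc_of_hasDerivWithinAt_nonneg (g' := fun t => u a - q0 * (t - a) - u t)
      (fun t ht => ?_) (fun t ht => ?_)
    · have hP : HasDerivAt (fun t => u a * t - q0 * (t - a) ^ 2 / 2) (u a - q0 * (t - a)) t :=
        (((hasDerivAt_id' t).const_mul (u a)).sub
          ((((hasDerivAt_id' t).sub_const a).pow 2).const_mul q0 |>.div_const 2)).congr_deriv
          (by simp; ring)
      exact hP.hasDerivWithinAt.sub (h t ht).1
    · have := h.mul_sub_le_sub hf ha (Ioo_subset_Icc_self ht) ht.1.le
      linarith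
  have := hmono ha (right_mem_Icc.2 hab.le) hab.le
  simp only [sub_self, hφ] at this
  nlinarith

end IsPBSol

section Boltzmann

variable {N : ℕ} {z c : Fin N → ℝ} {q0 : ℝ} {f : ℝ → ℝ}

lemma le_of_boltzmann (hc : ∀ j, 0 < c j) (hz : ∀ j, 0 < z j)
    (hf : ∀ φ : ℝ, f φ = q0 + ∑ j, z j * c j * Real.exp (-(z j) * φ)) (y : ℝ) :
    q0 ≤ f y := by
  rw [hf]
  have : 0 ≤ ∑ j, z j * c j * Real.exp (-(z j) * y) :=
    Finset.sum_nonneg fun j _ => by have := hz j; have := hc j; positivity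
  linarith

lemma IsPBSol.sub_le_mul_add_div {a b : ℝ} {φ u : ℝ → ℝ} (h : IsPBSol f a b φ u)
    (hc : ∀ j, 0 < c j) (hz : ∀ j, 0 < z j)
    (hf : ∀ φ : ℝ, f φ = q0 + ∑ j, z j * c j * Real.exp (-(z j) * φ))
    (hab : a ≤ b) {m : ℝ} (hm0 : 0 < m) (hm : ∀ t ∈ Icc a b, m ≤ u t) :
    u a - u b ≤ q0 * (b - a) + (∑ j, c j * Real.exp (-(z j) * φ a)) / m := by
  -- `H' ≥ f ∘ φ` on `[a, b]`, so `u + H` is monotone.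
  set H : ℝ → ℝ := fun t => q0 * t - ∑ j, c j / m * Real.exp (-(z j) * (φ a + m * (t - a)))
  have hH : ∀ t,
      HasDerivAt H (q0 + ∑ j, z j * c j * Real.exp (-(z j) * (φ a + m * (t - a)))) t := by
    intro t
    have hterm : ∀ j, HasDerivAt (fun t => c j / m * Real.exp (-(z j) * (φ a + m * (t - a))))
        (-(z j * c j * Real.exp (-(z j) * (φ a + m * (t - a))))) t := by
      intro j
      have hlin : HasDerivAt (fun t => -(z j) * (φ a + m * (t - a))) (-(z j) * (m * 1)) t :=
        ((((hasDerivAt_id' t).sub_const a).const_mul m).const_add (φ a)).const_mul (-(z j))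
      exact (hlin.exp.const_mul (c j / m)).congr_deriv (by field_simp)
    exact (((hasDerivAt_id' t).const_mul q0).sub
      (HasDerivAt.fun_sum fun j _ => hterm j)).congr_deriv (by simp [Finset.sum_neg_distrib])
  have hmono : MonotoneOn (fun t => u t + H t) (Icc a b) := by
    refine monotoneOn_Icc_of_hasDerivWithinAt_nonneg
      (fun t ht => (h t ht).2.add (hH t).hasDerivWithinAt) (fun t ht => ?_)
    have hφt := h.add_mul_sub_le hm (Ioo_subset_Icc_self ht)
    have : f (φ t) ≤ q0 + ∑ j, z j * c j * Real.exp (-(z j) * (φ a + m * (t - a))) := by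
      rw [hf]
      gcongr 1
      refine Finset.sum_le_sum fun j _ =>
        mul_le_mul_of_nonneg_left ?_ (mul_pos (hz j) (hc j)).le
      exact exp_le_exp.2 (by nlinarith [hz j])
    linarith
  have hab' := hmono (left_mem_Icc.2 hab) (right_mem_Icc.2 hab) hab
  have hEb : 0 ≤ ∑ j, c j / m * Real.exp (-(z j) * (φ a + m * (b - a))) :=
    Finset.sum_nonneg fun j _ => by have := hc j; positivity
  have hEa : ∑ j, c j / m * Real.exp (-(z j) * (φ a + m * (a - a))) =
      (∑ j, c j * Real.exp (-(z j) * φ a)) / m := by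
    rw [Finset.sum_div]
    refine Finset.sum_congr rfl fun j _ => ?_
    simp only [sub_self, mul_zero, add_zero]
    ring
  simp only [H] at hab'
  linarith

lemma IsPBSol.width_lower_bound {a b : ℝ} {φ u : ℝ → ℝ} (h : IsPBSol f a b φ u)
    (hc : ∀ j, 0 < c j) (hz : ∀ j, 0 < z j)
    (hf : ∀ φ : ℝ, f φ = q0 + ∑ j, z j * c j * Real.exp (-(z j) * φ)) (hq0 : 0 < q0)
    (hab : a < b) (hφ : φ a = φ b) {e : ℝ} (he : e ∈ Ioo a b) (hue : u e = u a / 2) :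
    (b - a) / 4 - 4 * (∑ j, c j * Real.exp (-(z j) * φ a)) / (q0 ^ 2 * (b - a)) ≤ e - a := by
  set G := ∑ j, c j * Real.exp (-(z j) * φ a)
  have hG : 0 ≤ G := Finset.sum_nonneg fun j _ => (mul_pos (hc j) (exp_pos _)).le
  have hfq0 := le_of_boltzmann hc hz hf
  set A := u a
  have hAL : q0 * (b - a) / 2 ≤ A := h.mul_sub_div_two_le hfq0 hab hφ
  have hA : 0 < A := lt_of_lt_of_le (by nlinarith) hAL
  have hsub : Icc a e ⊆ Icc a b := Icc_subset_Icc_right he.2.le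
  have hde : q0 * (e - a) ≤ A / 2 := by
    have := h.mul_sub_le_sub hfq0 (left_mem_Icc.2 hab.le) (Ioo_subset_Icc_self he) he.1.le
    linarith
  have hAe : A / 2 ≤ q0 * (e - a) + G / (A / 2) := by
    have hu : ∀ t ∈ Icc a e, A / 2 ≤ u t := fun t ht => by
      have := h.mul_sub_le_sub hfq0 (hsub ht) (Ioo_subset_Icc_self he) ht.2
      nlinarith [ht.2]
    have := (h.mono le_rfl he.2.le).sub_le_mul_add_div hc hz hf he.1.le (by positivity) hu
    linarith
  have hA2 : A ^ 2 / 2 ≤ q0 * (e - a) * A + 2 * G := by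
    have := mul_le_mul_of_nonneg_right hAe hA.le
    have hGA : G / (A / 2) * A = 2 * G := by field_simp
    nlinarith
  -- `t ↦ t²/2 - q0 (e - a) t` is increasing for `t ≥ q0 (e - a)`, and `A ≥ q0 (b - a)/2`.
  have hkey : (q0 * (b - a) / 2) ^ 2 / 2 - 2 * G ≤ q0 * (e - a) * (q0 * (b - a) / 2) := by
    have hL : 0 < q0 * (b - a) := mul_pos hq0 (sub_pos.2 hab)
    nlinarith [mul_nonneg (sub_nonneg.2 hAL)
      (by linarith : 0 ≤ (A + q0 * (b - a) / 2) / 2 - q0 * (e - a))]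
  have hP : 0 < q0 ^ 2 * (b - a) := by have := sub_pos.2 hab; positivity
  have hX : 4 * G / (q0 ^ 2 * (b - a)) * (q0 ^ 2 * (b - a)) = 4 * G := div_mul_cancel₀ _ hP.ne'
  refine sub_le_comm.1 (le_of_mul_le_mul_right ?_ hP)
  nlinarith

end Boltzmann

theorem stmt17_general {N : ℕ} (z c : Fin N → ℝ)
    (hc : ∀ j, 0 < c j) (q0 : ℝ)
    (f : ℝ → ℝ)
    (hf : ∀ φ : ℝ, f φ = q0 + ∑ j, z j * c j * Real.exp (-(z j) * φ))
    (hq0 : 0 < q0) (hzpos : ∀ j, 0 < z j)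
    (φs : ℝ)
    (φf uf : ℝ → ℝ → ℝ)
    (hsol : ∀ L : ℝ, 0 < L →
      IsPBSol f (-(L / 2)) (L / 2) (φf L) (uf L) ∧
      φf L (-(L / 2)) = φs ∧ φf L (L / 2) = φs)
    (δ : ℝ → ℝ)
    (hδ : ∀ L : ℝ, 0 < L →
      δ L ∈ Set.Ioo 0 L ∧ uf L (-(L / 2) + δ L) = uf L (-(L / 2)) / 2) :
    (1 / 4 : ℝ) ≤ Filter.liminf (fun L => δ L / L) atTop ∧
    Filter.limsup (fun L => δ L / L) atTop ≤ 1 := by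
  set G := ∑ j, c j * Real.exp (-(z j) * φs)
  have hlower : ∀ L : ℝ, 0 < L → 1 / 4 - 4 * G / q0 ^ 2 / L ^ 2 ≤ δ L / L := by
    intro L hL
    obtain ⟨hsolL, hφa, hφb⟩ := hsol L hL
    obtain ⟨⟨hδ0, hδL⟩, hu⟩ := hδ L hL
    have hwidth := hsolL.width_lower_bound hc hzpos hf hq0 (by linarith) (hφa.trans hφb.symm)
      ⟨by linarith, by linarith⟩ hu
    rw [hφa, show L / 2 - -(L / 2) = L by ring, add_sub_cancel_left] at hwidth
    rw [le_div_iff₀ hL]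
    calc (1 / 4 - 4 * G / q0 ^ 2 / L ^ 2) * L = L / 4 - 4 * G / (q0 ^ 2 * L) := by
          field_simp
      _ ≤ δ L := hwidth
  have hupper : ∀ᶠ L in atTop, δ L / L ≤ 1 :=
    (eventually_gt_atTop 0).mono fun L hL => (div_le_one hL).2 (hδ L hL).1.2.le
  have hnonneg : ∀ᶠ L in atTop, 0 ≤ δ L / L :=
    (eventually_gt_atTop 0).mono fun L hL => div_nonneg (hδ L hL).1.1.le hL.le
  have hbound : Tendsto (fun L : ℝ => 1 / 4 - 4 * G / q0 ^ 2 / L ^ 2) atTop (𝓝 (1 / 4)) := by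
    simpa using tendsto_const_nhds.sub
      (tendsto_const_nhds.div_atTop (tendsto_pow_atTop (α := ℝ) two_ne_zero))
  refine ⟨?_, limsup_le_of_le (isCoboundedUnder_le_of_eventually_le atTop hnonneg) hupper⟩
  calc (1 / 4 : ℝ) = liminf (fun L : ℝ => 1 / 4 - 4 * G / q0 ^ 2 / L ^ 2) atTop :=
        hbound.liminf_eq.symm
    _ ≤ liminf (fun L => δ L / L) atTop :=
        liminf_le_liminf ((eventually_gt_atTop 0).mono hlower) hbound.isBoundedUnder_ge
          (isCoboundedUnder_ge_of_eventually_le atTop hupper)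

/-- No Gouy–Chapman layer in the absence of equilibrium: if `q0 > 0` and
all `z j > 0`, and `δ_D(L)` is the boundary-layer width of the equal-potential Dirichlet
problem with value `φ_s` (determined by `φ_L'(-L/2 + δ_D(L)) = φ_L'(-L/2)/2`), then
`1/4 ≤ liminf_{L→∞} δ_D(L)/L ≤ limsup_{L→∞} δ_D(L)/L ≤ 1`, so `δ_D(L)` and `L` have the
same length scale. -/
theorem stmt17 {N : ℕ} (hN : 1 ≤ N) (z c : Fin N → ℝ)
    (hz : ∀ j, z j ≠ 0) (hc : ∀ j, 0 < c j) (q0 : ℝ)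
    (f : ℝ → ℝ)
    (hf : ∀ φ : ℝ, f φ = q0 + ∑ j, z j * c j * Real.exp (-(z j) * φ))
    (hq0 : 0 < q0) (hzpos : ∀ j, 0 < z j)
    (φs : ℝ)
    (φf uf : ℝ → ℝ → ℝ)
    (hsol : ∀ L : ℝ, 0 < L →
      IsPBSol f (-(L / 2)) (L / 2) (φf L) (uf L) ∧
      φf L (-(L / 2)) = φs ∧ φf L (L / 2) = φs)
    (δ : ℝ → ℝ)
    (hδ : ∀ L : ℝ, 0 < L →
      δ L ∈ Set.Ioo 0 L ∧ uf L (-(L / 2) + δ L) = uf L (-(L / 2)) / 2) :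
    (1 / 4 : ℝ) ≤ Filter.liminf (fun L => δ L / L) atTop ∧
    Filter.limsup (fun L => δ L / L) atTop ≤ 1 :=
  stmt17_general z c hc q0 f hf hq0 hzpos φs φf uf hsol δ hδ
end

section
/- Assume z_l < 0 for some l ∈ {1,…,N}. Then for every α ∈ ℝ with f(α) < 0, the improper integral I(α) = ∫_α^∞ (F(α) − F(φ))^{−1/2} dφ converges (is finite), and I(α) → 0 as α → +∞. -/
open Real Filter Set Topology MeasureTheory

/-! Since `F' = f` with `f` decreasing, `F α - F φ = ∫_α^φ (-f) ≥ -f(α) (φ - α)`, so the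
singularity of the integrand at `φ = α` is at worst `(φ - α)^{-1/2}`. For the tail, the term of
a negative valence `z_l` makes `-f(t) ≥ b e^{m t}` for large `t`, with `m = -z_l`; integrating
gives `F β - F φ ≥ (b/m) e^{m β} (e^{m(φ-β)} - 1)`, and
`∫_β^∞ (e^{m(φ-β)} - 1)^{-1/2} dφ = π/m` (an antiderivative is
`(2/m) arctan √(e^{m(φ-β)} - 1)`). Hence `I(α) ≤ (π/m) ((b/m) e^{m α})^{-1/2}` for large `α`,
which tends to `0`. -/

lemma hasDerivAt_arctan_sqrt_exp_sub_one {m β x : ℝ} (hm : 0 < m) (hx : β < x) :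
    HasDerivAt (fun y => 2 / m * arctan √(exp (m * (y - β)) - 1))
      (√(exp (m * (x - β)) - 1))⁻¹ x := by
  have hpos : 0 < exp (m * (x - β)) - 1 := by
    linarith [one_lt_exp_iff.2 (mul_pos hm (sub_pos.2 hx))]
  have hinner : HasDerivAt (fun y => exp (m * (y - β)) - 1) (exp (m * (x - β)) * m) x := by
    simpa using (((hasDerivAt_id x).sub_const β).const_mul m).exp.sub_const 1
  refine ((hinner.sqrt hpos.ne').arctan.const_mul (2 / m)).congr_deriv ?_
  rw [sq_sqrt hpos.le, add_sub_cancel]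
  field_simp

lemma tendsto_arctan_sqrt_exp_sub_one {m : ℝ} (hm : 0 < m) (β : ℝ) :
    Tendsto (fun y => 2 / m * arctan √(exp (m * (y - β)) - 1)) atTop (𝓝 (π / m)) := by
  have hexp : Tendsto (fun y => exp (m * (y - β)) - 1) atTop atTop := by
    simpa [sub_eq_add_neg] using tendsto_atTop_add_const_right atTop (-1)
      (tendsto_exp_atTop.comp
        ((tendsto_atTop_add_const_right atTop (-β) tendsto_id).const_mul_atTop hm))
  have harctan := (tendsto_arctan_atTop.mono_right nhdsWithin_le_nhds).comp
    (tendsto_sqrt_atTop.comp hexp)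
  rw [show π / m = 2 / m * (π / 2) by ring]
  exact harctan.const_mul (2 / m)

lemma integrableOn_Ioi_inv_sqrt_exp_sub_one {m : ℝ} (hm : 0 < m) (β : ℝ) :
    IntegrableOn (fun x => (√(exp (m * (x - β)) - 1))⁻¹) (Ioi β) :=
  integrableOn_Ioi_deriv_of_nonneg (by fun_prop)
    (fun _ hx => hasDerivAt_arctan_sqrt_exp_sub_one hm hx) (fun _ _ => by positivity)
    (tendsto_arctan_sqrt_exp_sub_one hm β)

lemma integral_Ioi_inv_sqrt_exp_sub_one {m : ℝ} (hm : 0 < m) (β : ℝ) :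
    ∫ x in Ioi β, (√(exp (m * (x - β)) - 1))⁻¹ = π / m := by
  rw [integral_Ioi_of_hasDerivAt_of_nonneg (by fun_prop)
    (fun _ hx => hasDerivAt_arctan_sqrt_exp_sub_one hm hx) (fun _ _ => by positivity)
    (tendsto_arctan_sqrt_exp_sub_one hm β)]
  simp

lemma integrableOn_Ioc_inv_sqrt_sub (α β : ℝ) :
    IntegrableOn (fun x => (√(x - α))⁻¹) (Ioc α β) := by
  have h := (intervalIntegral.intervalIntegrable_rpow' (a := 0) (b := β - α)
    (r := -(1 / 2)) (by norm_num)).comp_sub_right α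
  simp only [zero_add, sub_add_cancel] at h
  refine h.1.congr_fun (fun x hx => ?_) measurableSet_Ioc
  simp only [rpow_neg (sub_pos.2 hx.1).le, sqrt_eq_rpow, one_div]

lemma one_div_sqrt_le_inv_sqrt_mul_inv_sqrt {a b y : ℝ} (ha : 0 < a) (hb : 0 < b)
    (h : a * b ≤ y) : 1 / √y ≤ (√a)⁻¹ * (√b)⁻¹ := by
  rw [← mul_inv, ← sqrt_mul ha.le, ← one_div]
  exact one_div_le_one_div_of_le (sqrt_pos.2 (mul_pos ha hb)) (sqrt_le_sqrt h)

section DecreasingDerivative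

variable {F f : ℝ → ℝ}

lemma integral_le_sub_of_le_neg_deriv (hF : ∀ t, HasDerivAt F (f t) t) (hf : Antitone f)
    {g : ℝ → ℝ} {a b : ℝ} (hg : IntervalIntegrable g volume a b) (hab : a ≤ b)
    (hgf : ∀ t ∈ Icc a b, g t ≤ -f t) : ∫ t in a..b, g t ≤ F a - F b := by
  have hFTC : ∫ t in a..b, -f t = F a - F b := by
    rw [intervalIntegral.integral_neg,
      intervalIntegral.integral_eq_sub_of_hasDerivAt (fun t _ => hF t) hf.intervalIntegrable]
    ring
  exact hFTC ▸ intervalIntegral.integral_mono_on hab hg hf.neg.intervalIntegrable hgf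

lemma neg_mul_sub_le_sub (hF : ∀ t, HasDerivAt F (f t) t) (hf : Antitone f) {a φ : ℝ}
    (haφ : a ≤ φ) : -f a * (φ - a) ≤ F a - F φ := by
  simpa [mul_comm] using integral_le_sub_of_le_neg_deriv hF hf intervalIntegrable_const haφ
    fun t ht => neg_le_neg (hf ht.1)

lemma mul_exp_mul_sub_one_le_sub (hF : ∀ t, HasDerivAt F (f t) t) (hf : Antitone f)
    {b m T β φ : ℝ} (hm : 0 < m) (hgrowth : ∀ t ≥ T, b * exp (m * t) ≤ -f t)
    (hβ : T ≤ β) (hβφ : β ≤ φ) :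
    b / m * exp (m * β) * (exp (m * (φ - β)) - 1) ≤ F β - F φ := by
  have hderiv : ∀ t, HasDerivAt (fun s => b / m * exp (m * s)) (b * exp (m * t)) t := by
    intro t
    refine ((((hasDerivAt_id t).const_mul m).exp).const_mul (b / m)).congr_deriv ?_
    field_simp
    simp
  have hcont : Continuous fun t => b * exp (m * t) := by fun_prop
  have hint := integral_le_sub_of_le_neg_deriv hF hf (hcont.intervalIntegrable β φ) hβφ
    fun t ht => hgrowth t (hβ.trans ht.1)
  rw [intervalIntegral.integral_eq_sub_of_hasDerivAt (fun t _ => hderiv t)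
    (hcont.intervalIntegrable β φ)] at hint
  calc b / m * exp (m * β) * (exp (m * (φ - β)) - 1)
      = b / m * exp (m * φ) - b / m * exp (m * β) := by
        rw [mul_sub, mul_assoc, ← exp_add]
        ring_nf
    _ ≤ F β - F φ := hint

lemma one_div_sqrt_sub_le_of_lt (hF : ∀ t, HasDerivAt F (f t) t) (hf : Antitone f)
    {α φ : ℝ} (hα : f α < 0) (hαφ : α < φ) :
    1 / √(F α - F φ) ≤ (√(-f α))⁻¹ * (√(φ - α))⁻¹ :=
  one_div_sqrt_le_inv_sqrt_mul_inv_sqrt (neg_pos.2 hα) (sub_pos.2 hαφ)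
    (neg_mul_sub_le_sub hF hf hαφ.le)

lemma one_div_sqrt_sub_le_of_exp_growth (hF : ∀ t, HasDerivAt F (f t) t) (hf : Antitone f)
    {b m T α β φ : ℝ} (hb : 0 < b) (hm : 0 < m)
    (hgrowth : ∀ t ≥ T, b * exp (m * t) ≤ -f t) (hα : f α < 0) (hαβ : α ≤ β) (hβ : T ≤ β)
    (hβφ : β < φ) :
    1 / √(F α - F φ) ≤ (√(b / m * exp (m * β)))⁻¹ * (√(exp (m * (φ - β)) - 1))⁻¹ := by
  have hαβF : 0 ≤ F α - F β := (mul_nonneg (neg_nonneg.2 hα.le) (sub_nonneg.2 hαβ)).trans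
    (neg_mul_sub_le_sub hF hf hαβ)
  refine one_div_sqrt_le_inv_sqrt_mul_inv_sqrt (by positivity) ?_ ?_
  · linarith [one_lt_exp_iff.2 (mul_pos hm (sub_pos.2 hβφ))]
  · linarith [mul_exp_mul_sub_one_le_sub hF hf hm hgrowth hβ hβφ.le]

lemma measurable_one_div_sqrt_sub (hF : ∀ t, HasDerivAt F (f t) t) (α : ℝ) :
    Measurable fun φ => 1 / √(F α - F φ) := by
  have hFc : Continuous F := continuous_iff_continuousAt.2 fun t => (hF t).continuousAt
  exact ((continuous_const.sub hFc).sqrt.measurable).const_div 1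

theorem integrableOn_one_div_sqrt_sub (hF : ∀ t, HasDerivAt F (f t) t) (hf : Antitone f)
    {b m : ℝ} (hb : 0 < b) (hm : 0 < m) (hgrowth : ∀ᶠ t in atTop, b * exp (m * t) ≤ -f t)
    {α : ℝ} (hα : f α < 0) :
    IntegrableOn (fun φ => 1 / √(F α - F φ)) (Ioi α) := by
  obtain ⟨T, hT⟩ := eventually_atTop.1 hgrowth
  set β := max α T
  rw [← Ioc_union_Ioi_eq_Ioi (le_max_left α T)]
  refine IntegrableOn.union ?_ ?_
  · refine ((integrableOn_Ioc_inv_sqrt_sub α β).const_mul (√(-f α))⁻¹).mono'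
      (measurable_one_div_sqrt_sub hF α).aestronglyMeasurable
      ((ae_restrict_iff' measurableSet_Ioc).2 (ae_of_all _ fun φ hφ => ?_))
    rw [norm_of_nonneg (by positivity)]
    exact one_div_sqrt_sub_le_of_lt hF hf hα hφ.1
  · refine ((integrableOn_Ioi_inv_sqrt_exp_sub_one hm β).const_mul
      (√(b / m * exp (m * β)))⁻¹).mono'
      (measurable_one_div_sqrt_sub hF α).aestronglyMeasurable
      ((ae_restrict_iff' measurableSet_Ioi).2 (ae_of_all _ fun φ hφ => ?_))
    rw [norm_of_nonneg (by positivity)]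
    exact one_div_sqrt_sub_le_of_exp_growth hF hf hb hm hT hα (le_max_left α T)
      (le_max_right α T) hφ

theorem tendsto_integral_one_div_sqrt_sub (hF : ∀ t, HasDerivAt F (f t) t) (hf : Antitone f)
    {b m : ℝ} (hb : 0 < b) (hm : 0 < m) (hgrowth : ∀ᶠ t in atTop, b * exp (m * t) ≤ -f t) :
    Tendsto (fun α => ∫ φ in Ioi α, 1 / √(F α - F φ)) atTop (𝓝 0) := by
  obtain ⟨T, hT⟩ := eventually_atTop.1 hgrowth
  have hbound : ∀ α ≥ T,
      ∫ φ in Ioi α, 1 / √(F α - F φ) ≤ (√(b / m * exp (m * α)))⁻¹ * (π / m) := by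
    intro α hα
    have hfα : f α < 0 := by linarith [hT α hα, mul_pos hb (exp_pos (m * α))]
    rw [← integral_Ioi_inv_sqrt_exp_sub_one hm α, ← integral_const_mul]
    exact setIntegral_mono_on (integrableOn_one_div_sqrt_sub hF hf hb hm hgrowth hfα)
      ((integrableOn_Ioi_inv_sqrt_exp_sub_one hm α).const_mul _) measurableSet_Ioi
      fun φ hφ => one_div_sqrt_sub_le_of_exp_growth hF hf hb hm hT hfα le_rfl hα hφ
  have hlim : Tendsto (fun α => (√(b / m * exp (m * α)))⁻¹ * (π / m)) atTop (𝓝 0) := by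
    have hexp : Tendsto (fun α => b / m * exp (m * α)) atTop atTop :=
      (tendsto_exp_atTop.comp (tendsto_id.const_mul_atTop hm)).const_mul_atTop (by positivity)
    simpa using (tendsto_sqrt_atTop.comp hexp).inv_tendsto_atTop.mul_const (π / m)
  refine tendsto_of_tendsto_of_tendsto_of_le_of_le' tendsto_const_nhds hlim ?_
    (eventually_atTop.2 ⟨T, hbound⟩)
  exact Eventually.of_forall fun α => setIntegral_nonneg measurableSet_Ioi fun _ _ => by positivity

end DecreasingDerivative

lemma hasDerivAt_mul_sub_sum_mul_exp {N : ℕ} (q0 : ℝ) (z c : Fin N → ℝ) (x : ℝ) :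
    HasDerivAt (fun φ => q0 * φ - ∑ j, c j * exp (-(z j) * φ))
      (q0 + ∑ j, z j * c j * exp (-(z j) * x)) x := by
  refine (((hasDerivAt_id x).const_mul q0).sub (HasDerivAt.fun_sum (u := Finset.univ)
    fun j _ => (((hasDerivAt_id x).const_mul (-(z j))).exp).const_mul (c j))).congr_deriv ?_
  simp only [id, mul_one, sub_eq_add_neg, ← Finset.sum_neg_distrib]
  congr 1
  exact Finset.sum_congr rfl fun j _ => by ring

lemma antitone_mul_exp_neg_mul (z : ℝ) : Antitone fun φ => z * exp (-z * φ) := by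
  intro s t hst
  rcases le_total 0 z with hz | hz
  · exact mul_le_mul_of_nonneg_left (exp_le_exp.2 (by nlinarith)) hz
  · exact mul_le_mul_of_nonpos_left (exp_le_exp.2 (by nlinarith)) hz

lemma antitone_add_sum_mul_exp {N : ℕ} (q0 : ℝ) (z c : Fin N → ℝ) (hc : ∀ j, 0 ≤ c j) :
    Antitone fun φ => q0 + ∑ j, z j * c j * exp (-(z j) * φ) := by
  intro s t hst
  refine add_le_add_right (Finset.sum_le_sum fun j _ => ?_) q0
  have h := mul_le_mul_of_nonneg_left (antitone_mul_exp_neg_mul (z j) hst) (hc j)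
  linarith

lemma mul_exp_neg_mul_le_abs_mul {z c t : ℝ} (hc : 0 ≤ c) (ht : 0 ≤ t) :
    z * c * exp (-z * t) ≤ |z| * c := by
  rcases le_total z 0 with hz | hz
  · have h1 : 0 ≤ -z * c * exp (-z * t) :=
      mul_nonneg (mul_nonneg (neg_nonneg.2 hz) hc) (exp_pos _).le
    linarith [mul_nonneg (abs_nonneg z) hc]
  · rw [abs_of_nonneg hz]
    nlinarith [exp_le_one_iff.2 (by nlinarith : -z * t ≤ 0), mul_nonneg hz hc]

lemma eventually_mul_exp_le_neg_add_sum_mul_exp {N : ℕ} (q0 : ℝ) (z c : Fin N → ℝ)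
    (hc : ∀ j, 0 ≤ c j) {l : Fin N} (hl : z l < 0) (hcl : 0 < c l) :
    ∀ᶠ t in atTop, -(z l) * c l / 2 * exp (-(z l) * t)
      ≤ -(q0 + ∑ j, z j * c j * exp (-(z j) * t)) := by
  have hsum : ∀ t ≥ 0, ∑ j, z j * c j * exp (-(z j) * t)
      ≤ z l * c l * exp (-(z l) * t) + ∑ j, |z j| * c j := by
    intro t ht
    rw [← Finset.add_sum_erase _ _ (Finset.mem_univ l)]
    have hrest :
        ∑ j ∈ Finset.univ.erase l, z j * c j * exp (-(z j) * t) ≤ ∑ j, |z j| * c j :=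
      (Finset.sum_le_sum fun j _ => mul_exp_neg_mul_le_abs_mul (hc j) ht).trans
        (Finset.sum_le_sum_of_subset_of_nonneg (Finset.erase_subset _ _)
          fun j _ _ => mul_nonneg (abs_nonneg _) (hc j))
    linarith
  have hlarge : Tendsto (fun t => -(z l) * c l * exp (-(z l) * t)) atTop atTop :=
    (tendsto_exp_atTop.comp (tendsto_id.const_mul_atTop (neg_pos.2 hl))).const_mul_atTop
      (mul_pos (neg_pos.2 hl) hcl)
  filter_upwards [eventually_ge_atTop 0,
    hlarge.eventually_ge_atTop (2 * (|q0| + ∑ j, |z j| * c j))] with t ht hD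
  linarith [hsum t ht, le_abs_self q0]

theorem stmt19_general {N : ℕ} (z c : Fin N → ℝ)
    (hc : ∀ j, 0 < c j) (q0 : ℝ)
    (f F : ℝ → ℝ)
    (hf : ∀ φ : ℝ, f φ = q0 + ∑ j, z j * c j * Real.exp (-(z j) * φ))
    (hF : ∀ φ : ℝ, F φ = q0 * φ - ∑ j, c j * Real.exp (-(z j) * φ))
    (hzneg : ∃ l, z l < 0) :
    (∀ α : ℝ, f α < 0 →
      IntegrableOn (fun φ => 1 / Real.sqrt (F α - F φ)) (Set.Ioi α) volume) ∧
    Tendsto (fun α : ℝ => ∫ φ in Set.Ioi α, 1 / Real.sqrt (F α - F φ)) atTop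
      (𝓝 0) := by
  obtain ⟨l, hl⟩ := hzneg
  obtain rfl : f = _ := funext hf
  obtain rfl : F = _ := funext hF
  have hc' j := (hc j).le
  have hderiv := hasDerivAt_mul_sub_sum_mul_exp q0 z c
  have hanti := antitone_add_sum_mul_exp q0 z c hc'
  have hgrowth := eventually_mul_exp_le_neg_add_sum_mul_exp q0 z c hc' hl (hc l)
  have hm : 0 < -(z l) := neg_pos.2 hl
  have hb : 0 < -(z l) * c l / 2 := half_pos (mul_pos hm (hc l))
  exact ⟨fun α hα => integrableOn_one_div_sqrt_sub hderiv hanti hb hm hgrowth hα,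
    tendsto_integral_one_div_sqrt_sub hderiv hanti hb hm hgrowth⟩

/-- If some valence `z l < 0`, then for every `α` with `f(α) < 0` the
improper integral `I(α) = ∫_α^∞ (F(α) − F(φ))^{-1/2} dφ` converges, and `I(α) → 0`
as `α → +∞`. -/
theorem stmt19 {N : ℕ} (hN : 1 ≤ N) (z c : Fin N → ℝ)
    (hz : ∀ j, z j ≠ 0) (hc : ∀ j, 0 < c j) (q0 : ℝ)
    (f F : ℝ → ℝ)
    (hf : ∀ φ : ℝ, f φ = q0 + ∑ j, z j * c j * Real.exp (-(z j) * φ))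
    (hF : ∀ φ : ℝ, F φ = q0 * φ - ∑ j, c j * Real.exp (-(z j) * φ))
    (hzneg : ∃ l, z l < 0) :
    (∀ α : ℝ, f α < 0 →
      IntegrableOn (fun φ => 1 / Real.sqrt (F α - F φ)) (Set.Ioi α) volume) ∧
    Tendsto (fun α : ℝ => ∫ φ in Set.Ioi α, 1 / Real.sqrt (F α - F φ)) atTop
      (𝓝 0) :=
  stmt19_general z c hc q0 f F hf hF hzneg
end
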